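/- arXiv:1403.8030 — 3 statements merged into one kernel-verified Lean document; each statement's English description precedes it below -/
import Mathlib

section
/- Let V be a finite-dimensional vector space over ℚ and A : V → V linear. Then in ℚ[[t]], t · d/dt (log det(1 - tA)) = -Tr(tA(1 - tA)^{-1}), i.e., t · (det(1 - tA))' / det(1 - tA) = -Σ_{k≥1} Tr(A^k) t^k. -/
/-!
Jacobi's formula `D (det M) = tr (adj M · D M)` holds for any derivation `D`. For
`M = 1 - tA` over `ℚ⟦t⟧` the entrywise derivative is `-A`, and `M` has the explicit inverse
`S = ∑ₖ tᵏ Aᵏ`, so `adj M = det M • S`. Hence `t · (det M)' / det M = -t · tr (S A)`, and the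
coefficient of `tᵏ⁺¹` in `t · tr (S A)` is `tr (Aᵏ A)`.
-/

open PowerSeries Matrix Finset

namespace Derivation

section

variable {R A M : Type*} [CommSemiring R] [CommSemiring A] [AddCommMonoid M]
  [Algebra R A] [Module A M] [Module R M]

theorem leibniz_prod {ι : Type*} [DecidableEq ι] (D : Derivation R A M) (s : Finset ι)
    (f : ι → A) :
    D (∏ i ∈ s, f i) = ∑ i ∈ s, (∏ j ∈ s.erase i, f j) • D (f i) := by
  induction s using Finset.induction_on with
  | empty => simp
  | insert a s ha ih =>
    rw [prod_insert ha, leibniz, ih, sum_insert ha, erase_insert ha, smul_sum, add_comm]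
    congr 1
    refine sum_congr rfl fun i hi => ?_
    rw [smul_smul, erase_insert_of_ne (ne_of_mem_of_not_mem hi ha).symm,
      prod_insert fun h => ha (mem_of_mem_erase h)]

end

variable {R A n : Type*} [CommSemiring R] [CommRing A] [Algebra R A] [Fintype n] [DecidableEq n]

theorem map_det_eq_sum_det_updateCol (D : Derivation R A A) (M : Matrix n n A) :
    D M.det = ∑ j, (M.updateCol j fun i => D (M i j)).det := by
  simp_rw [det_apply, map_sum]
  rw [sum_comm]
  refine sum_congr rfl fun σ _ => ?_
  rw [Units.smul_def, map_zsmul, leibniz_prod, smul_sum]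
  refine sum_congr rfl fun j _ => ?_
  rw [← mul_prod_erase univ _ (mem_univ j), updateCol_self, smul_eq_mul, mul_comm]
  congr 2
  exact prod_congr rfl fun i hi => (updateCol_ne (ne_of_mem_erase hi)).symm

theorem map_det (D : Derivation R A A) (M : Matrix n n A) :
    D M.det = trace (adjugate M * M.map D) := by
  simp only [map_det_eq_sum_det_updateCol, ← cramer_apply, cramer_eq_adjugate_mulVec, trace,
    diag_apply, mul_apply, mulVec, dotProduct, map_apply]

end Derivation

namespace Matrix

variable {R n : Type*} [CommRing R] [DecidableEq n]

theorem map_derivative_one_sub_X_smul (A : Matrix n n R) :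
    (1 - (X : R⟦X⟧) • A.map C).map (d⁄dX R) = -A.map C := by
  ext i j
  simp [one_apply, apply_ite (d⁄dX R)]

variable [Fintype n]

noncomputable def geomSeries (A : Matrix n n R) : Matrix n n R⟦X⟧ :=
  of fun i j => PowerSeries.mk fun k => (A ^ k) i j

theorem geomSeries_eq_one_add (A : Matrix n n R) :
    A.geomSeries = 1 + (X : R⟦X⟧) • (A.map C * A.geomSeries) := by
  ext i j (_ | k)
  · simp [geomSeries, one_apply]
  · simp [geomSeries, one_apply, apply_ite (coeff (k + 1)), mul_apply, pow_succ', coeff_succ_X_mul]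

theorem one_sub_X_smul_mul_geomSeries (A : Matrix n n R) :
    (1 - (X : R⟦X⟧) • A.map C) * A.geomSeries = 1 := by
  rw [sub_mul, one_mul, smul_mul, sub_eq_iff_eq_add, ← geomSeries_eq_one_add]

theorem adjugate_one_sub_X_smul (A : Matrix n n R) :
    adjugate (1 - (X : R⟦X⟧) • A.map C) = (1 - (X : R⟦X⟧) • A.map C).det • A.geomSeries := by
  set M := 1 - (X : R⟦X⟧) • A.map C
  have hSM : A.geomSeries * M = 1 := mul_eq_one_comm.mp (one_sub_X_smul_mul_geomSeries A)
  calc adjugate M = A.geomSeries * (M * adjugate M) := by rw [← Matrix.mul_assoc, hSM, one_mul]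
    _ = M.det • A.geomSeries := by rw [mul_adjugate, Matrix.mul_smul, Matrix.mul_one]

theorem X_mul_trace_geomSeries_mul (A : Matrix n n R) :
    X * trace (A.geomSeries * A.map C) =
      PowerSeries.mk fun k => if k = 0 then 0 else trace (A ^ k) := by
  ext (_ | k)
  · simp
  · simp [geomSeries, trace, mul_apply, pow_succ, coeff_succ_X_mul]

theorem derivative_det_one_sub_X_smul (A : Matrix n n R) :
    d⁄dX R (1 - (X : R⟦X⟧) • A.map C).det =
      -((1 - (X : R⟦X⟧) • A.map C).det * trace (A.geomSeries * A.map C)) := by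
  rw [Derivation.map_det, map_derivative_one_sub_X_smul, adjugate_one_sub_X_smul, smul_mul,
    trace_smul, smul_eq_mul, Matrix.mul_neg, trace_neg, mul_neg]

end Matrix

/-- `t · d/dt (log det(1 - tA)) = -∑_{k≥1} Tr(Aᵏ) tᵏ` in `ℚ[[t]]`, i.e.
`t · (det(1 - tA))' / det(1 - tA) = -∑_{k≥1} Tr(Aᵏ) tᵏ`, where the quotient by
the unit `det(1 - tA)` is expressed via `Ring.inverse`. -/
theorem log_det_derivative (m : ℕ) (A : Matrix (Fin m) (Fin m) ℚ)
    (D : PowerSeries ℚ)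
    (hD : D = Matrix.det ((1 : Matrix (Fin m) (Fin m) (PowerSeries ℚ)) -
        (PowerSeries.X : PowerSeries ℚ) • A.map (PowerSeries.C (R := ℚ)))) :
    (PowerSeries.X : PowerSeries ℚ) * (PowerSeries.derivative ℚ D) * Ring.inverse D =
      -(PowerSeries.mk fun k => if k = 0 then 0 else Matrix.trace (A ^ k)) := by
  have hunit : IsUnit D := hD ▸ isUnit_det_of_right_inverse (one_sub_X_smul_mul_geomSeries A)
  calc X * d⁄dX ℚ D * Ring.inverse D
      = -(X * trace (A.geomSeries * A.map C)) * (D * Ring.inverse D) := by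
        rw [hD, derivative_det_one_sub_X_smul]; ring
    _ = _ := by rw [Ring.mul_inverse_cancel D hunit, X_mul_trace_geomSeries_mul, mul_one]
end

section
/- Let s : ℝ^i ∖ {0} → S^{i-1} × ℝ^i be the map s(y) = (y/‖y‖, y), and let γ = {(x, y) ∈ S^{i-1} × ℝ^i : ∃ t ∈ [0,∞), y = t·x} be the tautological half-line bundle over S^{i-1}. Then the closure of the image of s in S^{i-1} × ℝ^i equals γ. -/
/-! Over a unit vector `x`, a point `(x, y)` lies in the image of `y ↦ (y/‖y‖, y)` exactly when
`y = s • x` with `s > 0`. The fibres of the half-line bundle are the closures `[0, ∞) • x` of these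
open rays, and the bundle itself is closed because, over the sphere, `∃ t ≥ 0, y = t • x` is the
closed condition `y = ‖y‖ • x`. -/

open Set

variable {E : Type*} [NormedAddCommGroup E] [NormedSpace ℝ E]

def halfLineBundle (E : Type*) [NormedAddCommGroup E] [NormedSpace ℝ E] : Set (E × E) :=
  {p | ‖p.1‖ = 1 ∧ ∃ t : ℝ, 0 ≤ t ∧ p.2 = t • p.1}

theorem exists_nonneg_smul_iff_eq_norm_smul {x y : E} (hx : ‖x‖ = 1) :
    (∃ t : ℝ, 0 ≤ t ∧ y = t • x) ↔ y = ‖y‖ • x := by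
  refine ⟨?_, fun h => ⟨‖y‖, norm_nonneg y, h⟩⟩
  rintro ⟨t, ht, rfl⟩
  rw [norm_smul, hx, mul_one, Real.norm_of_nonneg ht]

theorem halfLineBundle_eq : halfLineBundle E = {p : E × E | ‖p.1‖ = 1 ∧ p.2 = ‖p.2‖ • p.1} := by
  ext p
  exact and_congr_right exists_nonneg_smul_iff_eq_norm_smul

theorem isClosed_halfLineBundle : IsClosed (halfLineBundle E) := by
  rw [halfLineBundle_eq]
  exact (isClosed_eq (by fun_prop) continuous_const).inter
    (isClosed_eq continuous_snd (by fun_prop))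

noncomputable def radialGraph (y : E) : E × E := (‖y‖⁻¹ • y, y)

theorem radialGraph_image_subset_halfLineBundle :
    radialGraph '' {y : E | y ≠ 0} ⊆ halfLineBundle E := by
  rintro _ ⟨y, hy : y ≠ 0, rfl⟩
  exact ⟨norm_smul_inv_norm hy, ‖y‖, norm_nonneg y,
    (smul_inv_smul₀ (norm_ne_zero_iff.mpr hy) y).symm⟩

theorem halfLineBundle_subset_closure_radialGraph :
    halfLineBundle E ⊆ closure (radialGraph '' {y : E | y ≠ 0}) := by
  rintro ⟨x, y⟩ ⟨hx : ‖x‖ = 1, t, ht, rfl : y = t • x⟩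
  have hray : (fun s : ℝ => (x, s • x)) '' Ioi 0 ⊆ radialGraph '' {y : E | y ≠ 0} := by
    rintro _ ⟨s, hs : 0 < s, rfl⟩
    have hsx : ‖s • x‖ = s := by rw [norm_smul, hx, mul_one, Real.norm_of_nonneg hs.le]
    refine ⟨s • x, smul_ne_zero hs.ne' (norm_ne_zero_iff.mp (hx ▸ one_ne_zero)), ?_⟩
    simp only [radialGraph, hsx, smul_smul, inv_mul_cancel₀ hs.ne', one_smul]
  have ht' : t ∈ closure (Ioi (0 : ℝ)) := by rwa [closure_Ioi]
  exact closure_mono hray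
    (image_closure_subset_closure_image (by fun_prop) (mem_image_of_mem _ ht'))

theorem closure_graph_radial_projection_general (i : ℕ) :
    closure ((fun y : EuclideanSpace ℝ (Fin i) =>
        ((‖y‖⁻¹ • y, y) : EuclideanSpace ℝ (Fin i) × EuclideanSpace ℝ (Fin i))) ''
      {y : EuclideanSpace ℝ (Fin i) | y ≠ 0}) =
    {p : EuclideanSpace ℝ (Fin i) × EuclideanSpace ℝ (Fin i) |
      ‖p.1‖ = 1 ∧ ∃ t : ℝ, 0 ≤ t ∧ p.2 = t • p.1} := by
  change closure (radialGraph '' _) = halfLineBundle _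
  exact (closure_minimal radialGraph_image_subset_halfLineBundle isClosed_halfLineBundle).antisymm
    halfLineBundle_subset_closure_radialGraph

/-- The closure in `S^{i-1} × ℝⁱ` (here taken inside `ℝⁱ × ℝⁱ`, which gives the
same set since `S^{i-1} × ℝⁱ` is closed) of the image of
`s : ℝⁱ ∖ {0} → S^{i-1} × ℝⁱ`, `s(y) = (y/‖y‖, y)`, equals the tautological
half-line bundle `γ = {(x,y) : ‖x‖ = 1, ∃ t ≥ 0, y = t • x}`. -/
theorem closure_graph_radial_projection (i : ℕ) (hi : 1 ≤ i) :
    closure ((fun y : EuclideanSpace ℝ (Fin i) =>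
        ((‖y‖⁻¹ • y, y) : EuclideanSpace ℝ (Fin i) × EuclideanSpace ℝ (Fin i))) ''
      {y : EuclideanSpace ℝ (Fin i) | y ≠ 0}) =
    {p : EuclideanSpace ℝ (Fin i) × EuclideanSpace ℝ (Fin i) |
      ‖p.1‖ = 1 ∧ ∃ t : ℝ, 0 ≤ t ∧ p.2 = t • p.1} :=
  closure_graph_radial_projection_general i
end

section
/- Let A = {(ηa, b, a, ηb) ∈ ℝ⁴ : a, b ∈ ℝ, η ∈ [0,1]} and A' = {(a, b, η') ∈ ℝ³ : a, b ∈ ℝ, 0 ≤ η' ≤ √(a² + b²)}. Then the map α sending (ηa, b, a, ηb) to (a, b, η√(a² + b²)) is a well-defined homeomorphism from A onto A', smooth away from the preimage of the origin. -/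
open Filter

/-- `A = {(ηa, b, a, ηb) : a, b ∈ ℝ, η ∈ [0,1]} ⊆ ℝ⁴`. -/
def Aset : Set (ℝ × ℝ × ℝ × ℝ) :=
  {p | ∃ a b η : ℝ, 0 ≤ η ∧ η ≤ 1 ∧ p = (η * a, b, a, η * b)}

/-- `A' = {(a, b, η') : 0 ≤ η' ≤ √(a² + b²)} ⊆ ℝ³`. -/
def Aset' : Set (ℝ × ℝ × ℝ) :=
  {q | 0 ≤ q.2.2 ∧ q.2.2 ≤ Real.sqrt (q.1 ^ 2 + q.2.1 ^ 2)}

/-- The global formula for the map `α`: on a point `p = (ηa, b, a, ηb)` it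
returns `(a, b, η√(a²+b²))`; note `a = p₃`, `b = p₂` and
`η√(a²+b²) = (p₁p₃ + p₄p₂)/√(p₃² + p₂²)` when `(a,b) ≠ (0,0)`. -/
noncomputable def alphaMap : ℝ × ℝ × ℝ × ℝ → ℝ × ℝ × ℝ := fun p =>
  (p.2.2.1, p.2.1,
    if p.2.2.1 = 0 ∧ p.2.1 = 0 then 0
    else (p.1 * p.2.2.1 + p.2.2.2 * p.2.1) / Real.sqrt (p.2.2.1 ^ 2 + p.2.1 ^ 2))

/-- Inverse map: `(a, b, η') ↦ (η'a/√(a²+b²), b, a, η'b/√(a²+b²))`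
(division by zero is zero in Lean, so no case split is needed). -/
noncomputable def betaMap : ℝ × ℝ × ℝ → ℝ × ℝ × ℝ × ℝ := fun q =>
  (q.2.2 * q.1 / Real.sqrt (q.1 ^ 2 + q.2.1 ^ 2), q.2.1, q.1,
    q.2.2 * q.2.1 / Real.sqrt (q.1 ^ 2 + q.2.1 ^ 2))

lemma sq_add_sq_pos' {a b : ℝ} (h : ¬(a = 0 ∧ b = 0)) : 0 < a ^ 2 + b ^ 2 := by
  rcases not_and_or.1 h with h | h
  · have : 0 < a ^ 2 := by positivity
    nlinarith [sq_nonneg b]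
  · have : 0 < b ^ 2 := by positivity
    nlinarith [sq_nonneg a]

lemma sqrt_pos_of_ne {a b : ℝ} (h : ¬(a = 0 ∧ b = 0)) :
    0 < Real.sqrt (a ^ 2 + b ^ 2) :=
  Real.sqrt_pos.2 (sq_add_sq_pos' h)

lemma sqrt_mul_self' {a b : ℝ} :
    Real.sqrt (a ^ 2 + b ^ 2) * Real.sqrt (a ^ 2 + b ^ 2) = a ^ 2 + b ^ 2 :=
  Real.mul_self_sqrt (by positivity)

lemma alpha_formula (a b η : ℝ) (hη : 0 ≤ η) :
    alphaMap (η * a, b, a, η * b) = (a, b, η * Real.sqrt (a ^ 2 + b ^ 2)) := by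
  unfold alphaMap
  by_cases h : a = 0 ∧ b = 0
  · obtain ⟨rfl, rfl⟩ := h
    simp
  · have hs := sqrt_pos_of_ne h
    have hss := sqrt_mul_self' (a := a) (b := b)
    simp only [h, if_false]
    refine Prod.ext rfl (Prod.ext rfl ?_)
    field_simp
    nlinarith [hss]

lemma beta_alpha (a b η : ℝ) (hη : 0 ≤ η) :
    betaMap (alphaMap (η * a, b, a, η * b)) = (η * a, b, a, η * b) := by
  rw [alpha_formula a b η hη]
  unfold betaMap
  by_cases h : a = 0 ∧ b = 0
  · obtain ⟨rfl, rfl⟩ := h; simp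
  · have hs := sqrt_pos_of_ne h
    refine Prod.ext ?_ (Prod.ext rfl (Prod.ext rfl ?_)) <;>
      · simp only
        field_simp
lemma alpha_beta (q : ℝ × ℝ × ℝ) (hq : q ∈ Aset') :
    alphaMap (betaMap q) = q := by
  obtain ⟨a, b, η'⟩ := q
  obtain ⟨h0, h1⟩ := hq
  simp only [Aset', Set.mem_setOf_eq] at h0 h1
  unfold betaMap alphaMap
  by_cases h : a = 0 ∧ b = 0
  · obtain ⟨rfl, rfl⟩ := h
    simp only [Real.sqrt_zero] at h1 ⊢
    have : η' = 0 := le_antisymm (by simpa using h1) h0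
    subst this
    simp
  · have hs := sqrt_pos_of_ne h
    have hss := sqrt_mul_self' (a := a) (b := b)
    simp only [h, if_false]
    refine Prod.ext rfl (Prod.ext rfl ?_)
    simp only
    rw [div_eq_iff hs.ne']
    field_simp
    nlinarith [hss, hs]

lemma alpha_mapsTo : Set.MapsTo alphaMap Aset Aset' := by
  rintro p ⟨a, b, η, hη0, hη1, rfl⟩
  rw [alpha_formula a b η hη0]
  constructor
  · exact mul_nonneg hη0 (Real.sqrt_nonneg _)
  · simpa using mul_le_of_le_one_left (Real.sqrt_nonneg _) hη1

lemma beta_mapsTo : Set.MapsTo betaMap Aset' Aset := by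
  rintro ⟨a, b, η'⟩ ⟨h0, h1⟩
  simp only [Aset', Set.mem_setOf_eq] at h0 h1
  by_cases h : a = 0 ∧ b = 0
  · obtain ⟨rfl, rfl⟩ := h
    have : η' = 0 := le_antisymm (by simpa using h1) h0
    subst this
    exact ⟨0, 0, 0, le_refl 0, zero_le_one, by simp [betaMap]⟩
  · have hs := sqrt_pos_of_ne h
    refine ⟨a, b, η' / Real.sqrt (a ^ 2 + b ^ 2), div_nonneg h0 hs.le,
      div_le_one_of_le₀ h1 hs.le, ?_⟩
    simp only [betaMap]
    refine Prod.ext ?_ (Prod.ext rfl (Prod.ext rfl ?_)) <;> · simp only; ring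

lemma alpha_contOn : ContinuousOn alphaMap Aset := by
  have hg : Continuous fun p : ℝ × ℝ × ℝ × ℝ =>
      (p.2.2.1, p.2.1, Real.sqrt (p.1 ^ 2 + p.2.2.2 ^ 2)) := by fun_prop
  refine hg.continuousOn.congr ?_
  rintro p ⟨a, b, η, hη0, hη1, rfl⟩
  rw [alpha_formula a b η hη0]
  have : (η * a) ^ 2 + (η * b) ^ 2 = η ^ 2 * (a ^ 2 + b ^ 2) := by ring
  simp only [this, Real.sqrt_mul (sq_nonneg η), Real.sqrt_sq hη0]

lemma beta_bound {q : ℝ × ℝ × ℝ} (hq : q ∈ Aset') (x : ℝ) :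
    |q.2.2 * x / Real.sqrt (q.1 ^ 2 + q.2.1 ^ 2)| ≤ |x| := by
  obtain ⟨h0, h1⟩ := hq
  rcases eq_or_lt_of_le (Real.sqrt_nonneg (q.1 ^ 2 + q.2.1 ^ 2)) with h | h
  · have h2 : q.2.2 = 0 := le_antisymm (h1.trans_eq h.symm) h0
    simp [h2]
  · rw [abs_div, abs_of_pos h, div_le_iff₀ h, abs_mul, abs_of_nonneg h0]
    calc q.2.2 * |x| ≤ Real.sqrt (q.1 ^ 2 + q.2.1 ^ 2) * |x| :=
          mul_le_mul_of_nonneg_right h1 (abs_nonneg x)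
      _ = |x| * Real.sqrt (q.1 ^ 2 + q.2.1 ^ 2) := mul_comm _ _

lemma beta_contOn : ContinuousOn betaMap Aset' := by
  intro q hq
  by_cases h : q.1 = 0 ∧ q.2.1 = 0
  · obtain ⟨ha, hb⟩ := h
    have hq' : q.2.2 = 0 := by
      obtain ⟨h0, h1⟩ := hq
      refine le_antisymm ?_ h0
      simpa [ha, hb] using h1
    have hbq : betaMap q = (0, 0, 0, 0) := by
      simp [betaMap, ha, hb, hq']
    rw [ContinuousWithinAt, hbq]
    have ht1 : Tendsto (fun q' : ℝ × ℝ × ℝ => q'.1) (nhdsWithin q Aset') (nhds 0) := by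
      have := (continuous_fst.tendsto q).mono_left (nhdsWithin_le_nhds (s := Aset'))
      simpa [ha] using this
    have ht2 : Tendsto (fun q' : ℝ × ℝ × ℝ => q'.2.1) (nhdsWithin q Aset') (nhds 0) := by
      have := ((continuous_fst.comp continuous_snd).tendsto q).mono_left
        (nhdsWithin_le_nhds (s := Aset'))
      simpa [hb, Function.comp_def] using this
    have hd1 : Tendsto
        (fun q' : ℝ × ℝ × ℝ => q'.2.2 * q'.1 / Real.sqrt (q'.1 ^ 2 + q'.2.1 ^ 2))
        (nhdsWithin q Aset') (nhds 0) := by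
      refine squeeze_zero_norm' ?_ (by simpa using ht1.abs)
      refine eventually_nhdsWithin_of_forall fun q' hq' => ?_
      rw [Real.norm_eq_abs]
      exact beta_bound hq' q'.1
    have hd2 : Tendsto
        (fun q' : ℝ × ℝ × ℝ => q'.2.2 * q'.2.1 / Real.sqrt (q'.1 ^ 2 + q'.2.1 ^ 2))
        (nhdsWithin q Aset') (nhds 0) := by
      refine squeeze_zero_norm' ?_ (by simpa using ht2.abs)
      refine eventually_nhdsWithin_of_forall fun q' hq' => ?_
      rw [Real.norm_eq_abs]
      exact beta_bound hq' q'.2.1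
    exact hd1.prodMk_nhds (ht2.prodMk_nhds (ht1.prodMk_nhds hd2))
  · have hs : Real.sqrt (q.1 ^ 2 + q.2.1 ^ 2) ≠ 0 := ne_of_gt (sqrt_pos_of_ne h)
    apply ContinuousAt.continuousWithinAt
    unfold betaMap
    fun_prop (disch := assumption)

noncomputable def alphaHomeo : Aset ≃ₜ Aset' where
  toFun p := ⟨alphaMap p, alpha_mapsTo p.2⟩
  invFun q := ⟨betaMap q, beta_mapsTo q.2⟩
  left_inv := by
    rintro ⟨p, a, b, η, hη0, hη1, rfl⟩
    exact Subtype.ext (beta_alpha a b η hη0)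
  right_inv := by
    rintro ⟨q, hq⟩
    exact Subtype.ext (alpha_beta q hq)
  continuous_toFun := Continuous.subtype_mk alpha_contOn.restrict _
  continuous_invFun := Continuous.subtype_mk beta_contOn.restrict _

lemma alpha_smooth :
    ContDiffOn ℝ (⊤ : ℕ∞) alphaMap (Aset \ {((0 : ℝ), (0 : ℝ), (0 : ℝ), (0 : ℝ))}) := by
  set U : Set (ℝ × ℝ × ℝ × ℝ) := {p | ¬(p.2.2.1 = 0 ∧ p.2.1 = 0)} with hU
  have hsub : Aset \ {((0 : ℝ), (0 : ℝ), (0 : ℝ), (0 : ℝ))} ⊆ U := by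
    rintro p ⟨⟨a, b, η, hη0, hη1, rfl⟩, hne⟩
    intro hab
    obtain ⟨ha, hb⟩ := hab
    simp only at ha hb
    subst ha; subst hb
    simp at hne
  refine ContDiffOn.mono ?_ hsub
  have hden : ContDiffOn ℝ (⊤ : ℕ∞)
      (fun p : ℝ × ℝ × ℝ × ℝ => Real.sqrt (p.2.2.1 ^ 2 + p.2.1 ^ 2)) U := by
    intro p hp
    have h0 : p.2.2.1 ^ 2 + p.2.1 ^ 2 ≠ 0 := ne_of_gt (sq_add_sq_pos' hp)
    exact ((Real.contDiffAt_sqrt h0).comp p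
      ((by fun_prop : ContDiff ℝ (⊤ : ℕ∞) fun p : ℝ × ℝ × ℝ × ℝ =>
        p.2.2.1 ^ 2 + p.2.1 ^ 2).contDiffAt)).contDiffWithinAt
  have hg : ContDiffOn ℝ (⊤ : ℕ∞) (fun p : ℝ × ℝ × ℝ × ℝ =>
      ((p.1 * p.2.2.1 + p.2.2.2 * p.2.1) / Real.sqrt (p.2.2.1 ^ 2 + p.2.1 ^ 2))) U := by
    refine ContDiffOn.div ?_ hden ?_
    · exact (by fun_prop : ContDiff ℝ (⊤ : ℕ∞) fun p : ℝ × ℝ × ℝ × ℝ =>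
        p.1 * p.2.2.1 + p.2.2.2 * p.2.1).contDiffOn
    · intro p hp
      exact ne_of_gt (sqrt_pos_of_ne hp)
  have h1 : ContDiffOn ℝ (⊤ : ℕ∞) (fun p : ℝ × ℝ × ℝ × ℝ => p.2.2.1) U :=
    (by fun_prop : ContDiff ℝ (⊤ : ℕ∞) fun p : ℝ × ℝ × ℝ × ℝ => p.2.2.1).contDiffOn
  have h2 : ContDiffOn ℝ (⊤ : ℕ∞) (fun p : ℝ × ℝ × ℝ × ℝ => p.2.1) U :=
    (by fun_prop : ContDiff ℝ (⊤ : ℕ∞) fun p : ℝ × ℝ × ℝ × ℝ => p.2.1).contDiffOn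
  refine (h1.prodMk (h2.prodMk hg)).congr ?_
  intro p hp
  simp only [alphaMap, if_neg hp]

/-- The map sending `(ηa, b, a, ηb)` to `(a, b, η√(a²+b²))` is a well-defined
homeomorphism from `A` onto `A'`, smooth away from the preimage of the origin. -/
theorem alpha_homeomorphism :
    (∀ a b η : ℝ, 0 ≤ η → η ≤ 1 →
      alphaMap (η * a, b, a, η * b) = (a, b, η * Real.sqrt (a ^ 2 + b ^ 2))) ∧
    (∃ h : Aset ≃ₜ Aset', ∀ p : Aset, (h p : ℝ × ℝ × ℝ) = alphaMap p) ∧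
    ContDiffOn ℝ (⊤ : ℕ∞) alphaMap (Aset \ {((0 : ℝ), (0 : ℝ), (0 : ℝ), (0 : ℝ))}) := by
  exact ⟨fun a b η h0 _ => alpha_formula a b η h0,
    ⟨alphaHomeo, fun p => rfl⟩, alpha_smooth⟩
end
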